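/- Let κ ∈ {+,−} and let Q be a branch of solutions of F(x,λ) = 0 at (0,λ₀) in the direction of κv. Then there exists ε ∈ (0,S) such that Q ⊆ C_{λ₀,ε}^κ; moreover Q ⊆ C_{λ₀,ε'}^κ for every 0 < ε' ≤ ε. -/
import Mathlib


open Set Topology

/-- A map `G` is compact on `B` if it is continuous on `B` and maps bounded closed
subsets of the ambient space contained in `B` to relatively compact sets. -/
def IsCompactMapOn {E F : Type*} [NormedAddCommGroup E] [NormedSpace ℝ E]
    [NormedAddCommGroup F] [NormedSpace ℝ F] (G : E → F) (B : Set E) : Prop :=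
  ContinuousOn G B ∧
    ∀ A : Set E, A ⊆ B → Bornology.IsBounded A → IsClosed A → IsCompact (closure (G '' A))

variable {X : Type*} [NormedAddCommGroup X] [NormedSpace ℝ X]

/-- The nonlinear map `F(x, λ) = x - λ K x - H (x, λ)`. -/
noncomputable def Fmap (K : X →L[ℝ] X) (H : X × ℝ → X) : X × ℝ → X :=
  fun p => p.1 - p.2 • K p.1 - H p

open Classical in
/-- The map `h(x, λ) = ‖x‖⁻¹ H(x,λ)` for `x ≠ 0`, `0` otherwise. -/
noncomputable def hmap (H : X × ℝ → X) : X × ℝ → X :=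
  fun p => if p.1 = 0 then 0 else ‖p.1‖⁻¹ • H p

/-- `μ` is a characteristic value of `K` if `μ⁻¹` is an eigenvalue of `K`. -/
def CharVal (K : X →L[ℝ] X) (μ : ℝ) : Prop :=
  Module.End.HasEigenvalue (K : X →ₗ[ℝ] X) μ⁻¹

/-- The multiplicity of a characteristic value `μ`: the dimension of the generalized
eigenspace `⋃_k ker((μ⁻¹ • I - K)^k)` of `K` for the eigenvalue `μ⁻¹`. -/
noncomputable def charMult (K : X →L[ℝ] X) (μ : ℝ) : ℕ :=
  Module.finrank ℝ (Module.End.maxGenEigenspace (K : X →ₗ[ℝ] X) μ⁻¹)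

/-- `𝔖(F)`: the closure in `Ω` of the set of non-trivial solutions of `F(x,λ) = 0`. -/
def SolClosure (F : X × ℝ → X) (Ω : Set (X × ℝ)) : Set (X × ℝ) :=
  closure {p | p ∈ Ω ∧ F p = 0 ∧ p.1 ≠ 0} ∩ Ω

/-- `C_{λ₀}(F)`: the connected component of `(0, λ₀)` in `𝔖(F) ∪ {(0, λ₀)}`. -/
noncomputable def Ccomp (F : X × ℝ → X) (Ω : Set (X × ℝ)) (lam0 : ℝ) : Set (X × ℝ) :=
  connectedComponentIn (SolClosure F Ω ∪ {((0 : X), lam0)}) ((0 : X), lam0)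

/-- `𝔛_{λ₀}(r) = {(x, μ) : ‖x‖ + |λ₀ - μ| < r}`. -/
def ball0 (X : Type*) [NormedAddCommGroup X] (lam0 r : ℝ) : Set (X × ℝ) :=
  {p | ‖p.1‖ + |lam0 - p.2| < r}

/-- The cone `𝔠_y⁺` (for `σ = 1`) resp. `𝔠_y⁻` (for `σ = -1`):
`{(x, λ) : σ l(x) > y ‖x‖}`. -/
def cone (l : X →L[ℝ] ℝ) (σ y : ℝ) : Set (X × ℝ) :=
  {p | y * ‖p.1‖ < σ * l p.1}

/-- The cone `𝔠_y = {(x, λ) : |l(x)| > y ‖x‖}`. -/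
def coneAbs (l : X →L[ℝ] ℝ) (y : ℝ) : Set (X × ℝ) :=
  {p | y * ‖p.1‖ < |l p.1|}

/-- A branch of solutions of `F(x,λ) = 0` at `(0, λ₀)` in the direction of `σ v`
(where `σ = ±1`): a connected subset `Q` of `C_{λ₀}(F)` containing `(0, λ₀)` such that
for every `y ∈ (0,1)` there is `ε_y > 0` with
`∅ ≠ Q ∩ ∂𝔛_{λ₀}(ε) ⊆ 𝔠_y^σ` for all `0 < ε < ε_y`. -/
def IsBranch (F : X × ℝ → X) (Ω : Set (X × ℝ)) (lam0 : ℝ) (l : X →L[ℝ] ℝ) (σ : ℝ)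
    (Q : Set (X × ℝ)) : Prop :=
  Q ⊆ Ccomp F Ω lam0 ∧ IsPreconnected Q ∧ ((0 : X), lam0) ∈ Q ∧
    ∀ y ∈ Ioo (0 : ℝ) 1, ∃ εy > 0, ∀ ε, 0 < ε → ε < εy →
      (Q ∩ frontier (ball0 X lam0 ε)).Nonempty ∧
        Q ∩ frontier (ball0 X lam0 ε) ⊆ cone l σ y

/-- `C_{λ₀}^κ(F)` for `κ = σ = ±1`: the closure in `Ω` of the union of `{(0, λ₀)}` and
all branches of solutions in the direction of `σ v`. -/
noncomputable def Cdir (F : X × ℝ → X) (Ω : Set (X × ℝ)) (lam0 : ℝ) (l : X →L[ℝ] ℝ)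
    (σ : ℝ) : Set (X × ℝ) :=
  closure ({((0 : X), lam0)} ∪ ⋃₀ {Q | IsBranch F Ω lam0 l σ Q}) ∩ Ω

/-- `C_{λ₀,ε}^κ` for `κ = σ = ±1`: the connected component of `(0, λ₀)` in
`C_{λ₀}(F) \ (𝔛_{λ₀}(ε) ∩ 𝔠_y^{-κ})`. -/
noncomputable def Cloc (F : X × ℝ → X) (Ω : Set (X × ℝ)) (lam0 : ℝ) (l : X →L[ℝ] ℝ)
    (y σ ε : ℝ) : Set (X × ℝ) :=
  connectedComponentIn (Ccomp F Ω lam0 \ (ball0 X lam0 ε ∩ cone l (-σ) y)) ((0 : X), lam0)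


lemma isOpen_ball0' (X : Type*) [NormedAddCommGroup X] (lam0 r : ℝ) :
    IsOpen (ball0 X lam0 r) := by
  have hc : Continuous fun p : X × ℝ => ‖p.1‖ + |lam0 - p.2| := by
    fun_prop
  exact isOpen_lt hc continuous_const

lemma mem_frontier_ball0' {X : Type*} [NormedAddCommGroup X] [NormedSpace ℝ X]
    {lam0 r : ℝ} (hr : 0 < r) {p : X × ℝ} (hp : ‖p.1‖ + |lam0 - p.2| = r) :
    p ∈ frontier (ball0 X lam0 r) := by
  rw [frontier, (isOpen_ball0' X lam0 r).interior_eq]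
  constructor
  · have hne : (𝓝[Ico (0:ℝ) 1] 1).NeBot := by
      refine mem_closure_iff_nhdsWithin_neBot.mp ?_
      rw [closure_Ico (by norm_num : (0:ℝ) ≠ 1)]
      exact ⟨by norm_num, le_refl 1⟩
    have hcont : Continuous fun t : ℝ => ((t • p.1, lam0 + t * (p.2 - lam0)) : X × ℝ) := by
      fun_prop
    have htend : Filter.Tendsto (fun t : ℝ => ((t • p.1, lam0 + t * (p.2 - lam0)) : X × ℝ))
        (𝓝[Ico (0:ℝ) 1] 1) (𝓝 p) := by
      have h1 : ((1:ℝ) • p.1, lam0 + 1 * (p.2 - lam0)) = p := by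
        simp
      have := (hcont.tendsto 1).mono_left (nhdsWithin_le_nhds (s := Ico (0:ℝ) 1))
      rwa [h1] at this
    refine mem_closure_of_tendsto htend ?_
    filter_upwards [eventually_mem_nhdsWithin] with t ht
    have ht0 : 0 ≤ t := ht.1
    have ht1 : t < 1 := ht.2
    show ‖t • p.1‖ + |lam0 - (lam0 + t * (p.2 - lam0))| < r
    have h1 : ‖t • p.1‖ = t * ‖p.1‖ := by
      rw [norm_smul, Real.norm_eq_abs, abs_of_nonneg ht0]
    have h2 : |lam0 - (lam0 + t * (p.2 - lam0))| = t * |lam0 - p.2| := by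
      have : lam0 - (lam0 + t * (p.2 - lam0)) = t * (lam0 - p.2) := by ring
      rw [this, abs_mul, abs_of_nonneg ht0]
    rw [h1, h2, ← mul_add, hp]
    nlinarith
  · simp only [ball0, mem_setOf_eq, hp]
    exact lt_irrefl r

/-- Every branch of solutions `Q` in the direction of `κv` is
contained in `C_{λ₀,ε}^κ` for some `ε ∈ (0,S)`, and then in `C_{λ₀,ε'}^κ` for every
`0 < ε' ≤ ε`. -/
theorem branch_subset_Cloc
    {X : Type*} [NormedAddCommGroup X] [NormedSpace ℝ X] [CompleteSpace X]
    (lam0 : ℝ) (Ω : Set (X × ℝ)) (hΩ : Ω ∈ 𝓝 ((0 : X), lam0))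
    (K : X →L[ℝ] X) (hK : IsCompactOperator K)
    (H : X × ℝ → X) (hH : IsCompactMapOn H Ω) (hh : ContinuousOn (hmap H) Ω)
    (hchar : CharVal K lam0) (hsimple : charMult K lam0 = 1)
    (v : X) (hv : ‖v‖ = 1) (hKv : K v = lam0⁻¹ • v)
    (l : X →L[ℝ] ℝ) (hl : ∀ x : X, l (K x) = lam0⁻¹ * l x) (hlv : l v = 1)
    (y : ℝ) (hy : y ∈ Ioo (0 : ℝ) 1) (S : ℝ) (hS0 : 0 < S)
    (hSΩ : closure (ball0 X lam0 S) ⊆ interior Ω)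
    (hScone : (SolClosure (Fmap K H) Ω ∩ closure (ball0 X lam0 S)) \ {((0 : X), lam0)}
      ⊆ coneAbs l y)
    (σ : ℝ) (hσ : σ = 1 ∨ σ = -1)
    (Q : Set (X × ℝ)) (hQ : IsBranch (Fmap K H) Ω lam0 l σ Q) :
    ∃ ε : ℝ, 0 < ε ∧ ε < S ∧ ∀ ε' : ℝ, 0 < ε' → ε' ≤ ε →
      Q ⊆ Cloc (Fmap K H) Ω lam0 l y σ ε' := by
  obtain ⟨hQC, hQconn, hQ0, hQy⟩ := hQ
  obtain ⟨εy, hεy, hbr⟩ := hQy y hy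
  refine ⟨min εy S / 2, by positivity, ?_, ?_⟩
  · calc min εy S / 2 ≤ S / 2 := by
          have := min_le_right εy S; linarith
      _ < S := by linarith
  intro ε' hε'0 hε'le
  have hεyS : min εy S / 2 < εy := by
    have := min_le_left εy S; linarith
  have hsub : Q ⊆ Ccomp (Fmap K H) Ω lam0 \ (ball0 X lam0 ε' ∩ cone l (-σ) y) := by
    intro p hp
    refine ⟨hQC hp, ?_⟩
    rintro ⟨hball, hcone⟩
    have hcone' : y * ‖p.1‖ < -σ * l p.1 := hcone
    have hp1 : p.1 ≠ 0 := by
      rintro h0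
      rw [h0] at hcone'
      simp at hcone'
    have hn : 0 < ‖p.1‖ := norm_pos_iff.mpr hp1
    set r := ‖p.1‖ + |lam0 - p.2| with hrdef
    have hr0 : 0 < r := by positivity
    have hrε : r < ε' := hball
    have hrlt : r < εy := lt_of_lt_of_le hrε (hε'le.trans hεyS.le)
    obtain ⟨-, hsub2⟩ := hbr r hr0 hrlt
    have hmem : p ∈ cone l σ y :=
      hsub2 ⟨hp, mem_frontier_ball0' hr0 rfl⟩
    have hmem' : y * ‖p.1‖ < σ * l p.1 := hmem
    nlinarith [hy.1]
  exact hQconn.subset_connectedComponentIn hQ0 hsub
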